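/- arXiv:2412.16790 — 10 statements merged into one kernel-verified Lean document; each statement's English description precedes it below -/
import Mathlib

section
/- For any graph G on n vertices and any k ∈ ℕ with k ≥ 1, the list color function satisfies P_ℓ(G, k+1)/(k+1)^n ≥ P_ℓ(G, k)/k^n. -/
open scoped Classical

/-- Number of proper `k`-colorings of `G` (the chromatic polynomial evaluated at `k`). -/
noncomputable def properCount {V : Type*} (G : SimpleGraph V) (k : ℕ) : ℕ :=
  Nat.card {f : V → Fin k // ∀ u v, G.Adj u v → f u ≠ f v}

/-- Number of proper `L`-colorings of `G` for a list assignment `L`. -/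
noncomputable def listCount {V : Type*} (G : SimpleGraph V) (L : V → Finset ℕ) : ℕ :=
  Nat.card {f : V → ℕ // (∀ v, f v ∈ L v) ∧ ∀ u v, G.Adj u v → f u ≠ f v}

/-- The list color function `P_ℓ(G, k)`. -/
noncomputable def listColorFn {V : Type*} (G : SimpleGraph V) (k : ℕ) : ℕ :=
  sInf {m | ∃ L : V → Finset ℕ, (∀ v, (L v).card = k) ∧ m = listCount G L}

/-- `H` (on vertex set `V × Fin k`, with `L v = {v} × Fin k`) is a `k`-fold DP-cover of `G`:
each part is a clique, cross-edges only between parts of adjacent vertices, and the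
cross-edges between parts of adjacent vertices form a matching. -/
def IsDPCover {V : Type*} (G : SimpleGraph V) (k : ℕ) (H : SimpleGraph (V × Fin k)) : Prop :=
  (∀ v : V, ∀ i j : Fin k, i ≠ j → H.Adj (v, i) (v, j)) ∧
  (∀ u v : V, ∀ i j : Fin k, H.Adj (u, i) (v, j) → u = v ∨ G.Adj u v) ∧
  (∀ u v : V, G.Adj u v →
    (∀ i j j' : Fin k, H.Adj (u, i) (v, j) → H.Adj (u, i) (v, j') → j = j') ∧
    (∀ i i' j : Fin k, H.Adj (u, i) (v, j) → H.Adj (u, i') (v, j) → i = i'))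

/-- A full `k`-fold DP-cover: the matching between the parts of adjacent vertices is perfect. -/
def IsFullDPCover {V : Type*} (G : SimpleGraph V) (k : ℕ) (H : SimpleGraph (V × Fin k)) : Prop :=
  IsDPCover G k H ∧ ∀ u v : V, G.Adj u v → ∀ i : Fin k, ∃! j : Fin k, H.Adj (u, i) (v, j)

/-- The number of `H`-colorings of `G` (independent sets of `H` with one vertex in each part,
encoded as functions `V → Fin k`). -/
noncomputable def dpCount {V : Type*} (k : ℕ) (H : SimpleGraph (V × Fin k)) : ℕ :=
  Nat.card {f : V → Fin k // ∀ u v : V, u ≠ v → ¬ H.Adj (u, f u) (v, f v)}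

/-- The DP color function `P_DP(G, k)`. -/
noncomputable def dpColorFn {V : Type*} (G : SimpleGraph V) (k : ℕ) : ℕ :=
  sInf {m | ∃ H : SimpleGraph (V × Fin k), IsDPCover G k H ∧ m = dpCount k H}

/-- The dual DP color function `P*_DP(G, k)`. -/
noncomputable def dualDPColorFn {V : Type*} (G : SimpleGraph V) (k : ℕ) : ℕ :=
  sSup {m | ∃ H : SimpleGraph (V × Fin k), IsFullDPCover G k H ∧ m = dpCount k H}

section Aux
variable {V : Type*} [Fintype V] (G : SimpleGraph V)

noncomputable def propFinset (L : V → Finset ℕ) : Finset (V → ℕ) :=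
  (Fintype.piFinset L).filter (fun f => ∀ u v, G.Adj u v → f u ≠ f v)

lemma listCount_eq (L : V → Finset ℕ) : listCount G L = (propFinset G L).card := by
  rw [listCount, ← Nat.card_eq_finsetCard]
  apply Nat.card_congr
  apply Equiv.subtypeEquivRight
  intro f
  simp [propFinset, Fintype.mem_piFinset]

lemma count_subsets {t : Finset ℕ} {k : ℕ} (ht : t.card = k + 1) {a : ℕ} (ha : a ∈ t) :
    ((t.powersetCard k).filter (fun s => a ∈ s)).card = k := by
  have h1 : (t.powersetCard k).card = k + 1 := by
    rw [Finset.card_powersetCard, ht, Nat.choose_succ_self_right]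
  have h2 : ((t.powersetCard k).filter (fun s => a ∉ s)) = (t.erase a).powersetCard k := by
    ext s
    simp only [Finset.mem_filter, Finset.mem_powersetCard, Finset.subset_erase]
    tauto
  have h3 : ((t.erase a).powersetCard k).card = 1 := by
    rw [Finset.card_powersetCard, Finset.card_erase_of_mem ha, ht]
    simp
  have h4 := Finset.card_filter_add_card_filter_not
      (s := t.powersetCard k) (p := fun s => a ∈ s)
  rw [h2] at h4
  omega

lemma key (k : ℕ) (L : V → Finset ℕ) (hL : ∀ v, (L v).card = k + 1) :
    (k + 1) ^ (Fintype.card V) * listColorFn G k ≤ k ^ (Fintype.card V) * listCount G L := by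
  set n := Fintype.card V
  set Q : V → Finset (Finset ℕ) := fun v => (L v).powersetCard k with hQ
  set D : Finset (V → Finset ℕ) := Fintype.piFinset Q with hD
  -- each S ∈ D is a k-assignment
  have hmemQ : ∀ S ∈ D, ∀ v, S v ⊆ L v ∧ (S v).card = k := by
    intro S hS v
    have := (Fintype.mem_piFinset.mp hS) v
    rwa [hQ, Finset.mem_powersetCard] at this
  -- Step A: sum over D of colorings counts
  have stepA : ∑ S ∈ D, (propFinset G S).card = (propFinset G L).card * k ^ n := by
    have hsub : ∀ S ∈ D, propFinset G S
        = (propFinset G L).filter (fun f => ∀ v, f v ∈ S v) := by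
      intro S hS
      ext f
      simp only [propFinset, Finset.mem_filter, Fintype.mem_piFinset]
      constructor
      · intro ⟨h1, h2⟩
        exact ⟨⟨fun v => (hmemQ S hS v).1 (h1 v), h2⟩, h1⟩
      · rintro ⟨⟨_, h2⟩, h3⟩
        exact ⟨h3, h2⟩
    calc ∑ S ∈ D, (propFinset G S).card
        = ∑ S ∈ D, ∑ f ∈ propFinset G L, if (∀ v, f v ∈ S v) then 1 else 0 := by
          refine Finset.sum_congr rfl fun S hS => ?_
          rw [hsub S hS, Finset.card_filter]
      _ = ∑ f ∈ propFinset G L, ∑ S ∈ D, if (∀ v, f v ∈ S v) then 1 else 0 :=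
          Finset.sum_comm
      _ = ∑ f ∈ propFinset G L, (D.filter (fun S => ∀ v, f v ∈ S v)).card := by
          refine Finset.sum_congr rfl fun f hf => ?_
          rw [Finset.card_filter]
      _ = ∑ f ∈ propFinset G L, k ^ n := by
          refine Finset.sum_congr rfl fun f hf => ?_
          have hfL : ∀ v, f v ∈ L v := by
            have := (Finset.mem_filter.mp hf).1
            exact Fintype.mem_piFinset.mp this
          have hfilt : D.filter (fun S => ∀ v, f v ∈ S v)
              = Fintype.piFinset (fun v => (Q v).filter (fun s => f v ∈ s)) := by
            ext S
            simp only [Finset.mem_filter, Fintype.mem_piFinset, hD, forall_and]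
          rw [hfilt, Fintype.card_piFinset]
          have : ∀ v : V, ((Q v).filter (fun s => f v ∈ s)).card = k := fun v =>
            count_subsets (hL v) (hfL v)
          simp only [this]
          rw [Finset.prod_const, Finset.card_univ]
      _ = (propFinset G L).card * k ^ n := by rw [Finset.sum_const, smul_eq_mul]
  -- Step B: each term is at least listColorFn G k
  have stepB : D.card * listColorFn G k ≤ ∑ S ∈ D, (propFinset G S).card := by
    rw [Finset.card_eq_sum_ones, Finset.sum_mul, one_mul]
    refine Finset.sum_le_sum fun S hS => ?_
    rw [← listCount_eq]
    exact Nat.sInf_le ⟨S, fun v => (hmemQ S hS v).2, rfl⟩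
  have hDcard : D.card = (k + 1) ^ n := by
    rw [hD, Fintype.card_piFinset]
    have : ∀ v : V, (Q v).card = k + 1 := fun v => by
      rw [hQ, Finset.card_powersetCard, hL v, Nat.choose_succ_self_right]
    simp only [this]
    rw [Finset.prod_const, Finset.card_univ]
  rw [listCount_eq, mul_comm (k ^ n)]
  rw [hDcard] at stepB
  omega

end Aux

theorem stmt0 {V : Type*} [Fintype V] (G : SimpleGraph V) (k : ℕ) (hk : 1 ≤ k) :
    (listColorFn G (k + 1) : ℝ) / ((k : ℝ) + 1) ^ (Fintype.card V) ≥
      (listColorFn G k : ℝ) / (k : ℝ) ^ (Fintype.card V) := by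
  set n := Fintype.card V
  have hne : {m | ∃ L : V → Finset ℕ, (∀ v, (L v).card = k + 1) ∧ m = listCount G L}.Nonempty :=
    ⟨listCount G (fun _ => Finset.range (k + 1)), fun _ => Finset.range (k + 1),
      fun _ => Finset.card_range _, rfl⟩
  obtain ⟨L, hL, hEq⟩ := Nat.sInf_mem hne
  have hEq' : listColorFn G (k + 1) = listCount G L := hEq
  have hkey : (k + 1) ^ n * listColorFn G k ≤ k ^ n * listColorFn G (k + 1) := by
    rw [hEq']; exact key G k L hL
  rw [ge_iff_le, div_le_div_iff₀ (by positivity) (by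
    have : (0:ℝ) < k := by exact_mod_cast hk
    positivity)]
  have hR : ((k:ℝ) + 1) ^ n * (listColorFn G k : ℝ)
      ≤ (k:ℝ) ^ n * (listColorFn G (k + 1) : ℝ) := by exact_mod_cast hkey
  rw [mul_comm ((listColorFn G k : ℝ)), mul_comm ((listColorFn G (k+1) : ℝ))]
  exact hR
end

section
/- For any graph G on n vertices and any k ∈ ℕ with k ≥ 1, the DP color function satisfies P_DP(G, k+1)/(k+1)^n ≥ P_DP(G, k)/k^n. -/
open scoped Classical

/-!
Fix a `(k + 1)`-fold cover `H` and choose one vertex `S v` in every part. Deleting the chosen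
vertices leaves a `k`-fold cover whose colorings are exactly the `H`-colorings avoiding `S`, so it
has at least `P_DP(G, k)` of them. Summing over all `(k + 1)^n` choices of `S` counts every
`H`-coloring `k^n` times, hence `(k + 1)^n P_DP(G, k) ≤ k^n P_DP(G, H)`; take `H` optimal.
-/

open Finset

section

variable {V : Type*} {G : SimpleGraph V}

lemma isDPCover_bot_boxProd_top (G : SimpleGraph V) (k : ℕ) :
    IsDPCover G k ((⊥ : SimpleGraph V) □ (⊤ : SimpleGraph (Fin k))) := by
  refine ⟨fun v i j hij => by simp [hij], fun u v i j h => by simp_all, fun u v huv => ?_⟩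
  simp [G.ne_of_adj huv]

lemma exists_isDPCover_dpCount_eq_dpColorFn (G : SimpleGraph V) (k : ℕ) :
    ∃ H : SimpleGraph (V × Fin k), IsDPCover G k H ∧ dpColorFn G k = dpCount k H :=
  Nat.sInf_mem (s := {m | ∃ H : SimpleGraph (V × Fin k), IsDPCover G k H ∧ m = dpCount k H})
    ⟨_, _, isDPCover_bot_boxProd_top G k, rfl⟩

lemma dpColorFn_le_dpCount {k : ℕ} {H : SimpleGraph (V × Fin k)} (hH : IsDPCover G k H) :
    dpColorFn G k ≤ dpCount k H :=
  Nat.sInf_le ⟨H, hH, rfl⟩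

lemma IsDPCover.comap {k m : ℕ} {H : SimpleGraph (V × Fin k)} (hH : IsDPCover G k H)
    (e : V → Fin m → Fin k) (he : ∀ v, Function.Injective (e v)) :
    IsDPCover G m (H.comap fun p => (p.1, e p.1 p.2)) := by
  obtain ⟨hclique, hcross, hmatch⟩ := hH
  refine ⟨fun v i j hij => hclique v _ _ ((he v).ne hij), fun u v i j h => hcross u v _ _ h,
    fun u v huv => ⟨fun i j j' h h' => he v ((hmatch u v huv).1 _ _ _ h h'),
      fun i i' j h h' => he u ((hmatch u v huv).2 _ _ _ h h')⟩⟩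

variable [Fintype V]

noncomputable def dpColorings {k : ℕ} (H : SimpleGraph (V × Fin k)) : Finset (V → Fin k) :=
  {f | ∀ u v, u ≠ v → ¬ H.Adj (u, f u) (v, f v)}

lemma dpCount_eq_card_dpColorings {k : ℕ} (H : SimpleGraph (V × Fin k)) :
    dpCount k H = #(dpColorings H) := by
  rw [dpCount, Nat.card_eq_fintype_card, ← Fintype.card_coe, dpColorings]
  simp

lemma card_filter_forall_ne {α : Type*} [Fintype α] [DecidableEq α] (g : V → α) :
    #{S : V → α | ∀ v, g v ≠ S v} = (Fintype.card α - 1) ^ Fintype.card V := by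
  have : ({S : V → α | ∀ v, g v ≠ S v} : Finset _) = Fintype.piFinset fun v => {g v}ᶜ := by
    ext S; simp [eq_comm]
  simp [this, card_compl]

lemma dpCount_comap_succAbove {k : ℕ} (H : SimpleGraph (V × Fin (k + 1))) (S : V → Fin (k + 1)) :
    dpCount k (H.comap fun p => (p.1, (S p.1).succAbove p.2)) =
      #{g ∈ dpColorings H | ∀ v, g v ≠ S v} := by
  rw [dpCount_eq_card_dpColorings]
  refine card_nbij (fun f v => (S v).succAbove (f v)) ?_ ?_ ?_
  · intro f hf
    simp_all [dpColorings, Fin.succAbove_ne]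
  · intro f _ f' _ h
    funext v
    exact Fin.succAbove_right_injective (congrFun h v)
  · intro g hg
    simp only [coe_filter, dpColorings, mem_filter, mem_univ, true_and, Set.mem_ofPred_eq] at hg
    choose f hf using fun v => Fin.exists_succAbove_eq (hg.2 v)
    refine ⟨f, ?_, funext hf⟩
    simpa [dpColorings, hf] using hg.1

lemma dpColorFn_mul_succ_pow_le {k : ℕ} {H : SimpleGraph (V × Fin (k + 1))}
    (hH : IsDPCover G (k + 1) H) :
    dpColorFn G k * (k + 1) ^ Fintype.card V ≤ dpCount (k + 1) H * k ^ Fintype.card V :=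
  calc dpColorFn G k * (k + 1) ^ Fintype.card V
      = ∑ _S : V → Fin (k + 1), dpColorFn G k := by simp [mul_comm]
    _ ≤ ∑ S : V → Fin (k + 1), dpCount k (H.comap fun p => (p.1, (S p.1).succAbove p.2)) :=
      sum_le_sum fun S _ =>
        dpColorFn_le_dpCount (hH.comap _ fun v => Fin.succAbove_right_injective)
    _ = ∑ S : V → Fin (k + 1), #{g ∈ dpColorings H | ∀ v, g v ≠ S v} :=
      sum_congr rfl fun S _ => dpCount_comap_succAbove H S
    _ = ∑ g ∈ dpColorings H, #{S : V → Fin (k + 1) | ∀ v, g v ≠ S v} :=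
      sum_card_bipartiteAbove_eq_sum_card_bipartiteBelow _
    _ = dpCount (k + 1) H * k ^ Fintype.card V := by
      simp [card_filter_forall_ne, dpCount_eq_card_dpColorings]

end

theorem stmt1 {V : Type*} [Fintype V] (G : SimpleGraph V) (k : ℕ) (hk : 1 ≤ k) :
    (dpColorFn G (k + 1) : ℝ) / ((k : ℝ) + 1) ^ (Fintype.card V) ≥
      (dpColorFn G k : ℝ) / (k : ℝ) ^ (Fintype.card V) := by
  obtain ⟨H, hH, hmin⟩ := exists_isDPCover_dpCount_eq_dpColorFn G (k + 1)
  have key : (dpColorFn G k : ℝ) * ((k : ℝ) + 1) ^ Fintype.card V ≤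
      dpColorFn G (k + 1) * (k : ℝ) ^ Fintype.card V := by
    rw [hmin]
    exact_mod_cast dpColorFn_mul_succ_pow_le hH
  have hk₀ : (0 : ℝ) < k := by exact_mod_cast hk
  rw [ge_iff_le, div_le_div_iff₀ (by positivity) (by positivity)]
  exact key
end

section
/- Let G be a graph on n vertices and k ∈ ℕ with k ≥ 1. If P(G, k+1)/(k+1)^n < P(G, k)/k^n, then P_ℓ(G, k) < P(G, k). -/
open scoped Classical

lemma listCount_eq_filter {V : Type*} [Fintype V] (G : SimpleGraph V) (L : V → Finset ℕ) :
    listCount G L =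
      ((Fintype.piFinset L).filter fun f => ∀ u v, G.Adj u v → f u ≠ f v).card := by
  classical
  have hset : {f : V → ℕ | (∀ v, f v ∈ L v) ∧ ∀ u v, G.Adj u v → f u ≠ f v}
      = ↑((Fintype.piFinset L).filter fun f => ∀ u v, G.Adj u v → f u ≠ f v) := by
    ext f
    simp [Fintype.mem_piFinset]
  calc Nat.card {f : V → ℕ // (∀ v, f v ∈ L v) ∧ ∀ u v, G.Adj u v → f u ≠ f v}
      = ({f : V → ℕ | (∀ v, f v ∈ L v) ∧ ∀ u v, G.Adj u v → f u ≠ f v} : Set _).ncard :=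
        Nat.card_coe_set_eq _
    _ = _ := by rw [hset, Set.ncard_coe_finset]

lemma properCount_eq_filter {V : Type*} [Fintype V] (G : SimpleGraph V) (m : ℕ) :
    properCount G m =
      ((Fintype.piFinset fun _ : V => Finset.range m).filter
        fun f => ∀ u v, G.Adj u v → f u ≠ f v).card := by
  classical
  have e : {f : V → Fin m // ∀ u v, G.Adj u v → f u ≠ f v} ≃
      {g : V → ℕ // (∀ v, g v ∈ Finset.range m) ∧ ∀ u v, G.Adj u v → g u ≠ g v} := by
    refine ⟨fun f => ⟨fun v => (f.1 v : ℕ), fun v => by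
        simp [Finset.mem_range, (f.1 v).isLt], fun u v huv hne => f.2 u v huv (Fin.ext hne)⟩,
      fun g => ⟨fun v => ⟨g.1 v, Finset.mem_range.mp (g.2.1 v)⟩,
        fun u v huv hne => g.2.2 u v huv (congrArg Fin.val hne)⟩, ?_, ?_⟩
    · intro f; ext v; rfl
    · intro g; ext v; rfl
  have hset : {g : V → ℕ | (∀ v, g v ∈ Finset.range m) ∧ ∀ u v, G.Adj u v → g u ≠ g v}
      = ↑((Fintype.piFinset fun _ : V => Finset.range m).filter
          fun f => ∀ u v, G.Adj u v → f u ≠ f v) := by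
    ext g
    simp [Fintype.mem_piFinset]
  calc properCount G m
      = Nat.card {g : V → ℕ //
          (∀ v, g v ∈ Finset.range m) ∧ ∀ u v, G.Adj u v → g u ≠ g v} := Nat.card_congr e
    _ = ({g : V → ℕ | (∀ v, g v ∈ Finset.range m) ∧
          ∀ u v, G.Adj u v → g u ≠ g v} : Set _).ncard := Nat.card_coe_set_eq _
    _ = _ := by rw [hset, Set.ncard_coe_finset]

theorem stmt3 {V : Type*} [Fintype V] (G : SimpleGraph V) (k : ℕ) (hk : 1 ≤ k)
    (h : (properCount G (k + 1) : ℝ) / ((k : ℝ) + 1) ^ (Fintype.card V) <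
      (properCount G k : ℝ) / (k : ℝ) ^ (Fintype.card V)) :
    listColorFn G k < properCount G k := by
  classical
  set n := Fintype.card V with hn
  have hkpos : (0 : ℝ) < (k : ℝ) := by exact_mod_cast hk
  -- translate the hypothesis to a natural-number inequality
  have h1 : (properCount G (k + 1) : ℝ) * (k : ℝ) ^ n <
      (properCount G k : ℝ) * ((k : ℝ) + 1) ^ n := by
    rw [div_lt_div_iff₀ (by positivity) (by positivity)] at h
    linarith
  have hnat : properCount G (k + 1) * k ^ n < properCount G k * (k + 1) ^ n := by
    have := h1
    push_cast at this
    exact_mod_cast this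
  set A := Fintype.piFinset fun _ : V => Finset.range (k + 1) with hA
  set B := A.filter fun f => ∀ u v, G.Adj u v → f u ≠ f v with hB
  set Lfun : (V → ℕ) → (V → Finset ℕ) := fun j v => (Finset.range (k + 1)).erase (j v) with hL
  -- the key double counting identity
  have key : ∑ j ∈ A, listCount G (Lfun j) = properCount G (k + 1) * k ^ n := by
    have step1 : ∀ j ∈ A, listCount G (Lfun j) =
        ∑ f ∈ B, if ∀ v, j v ≠ f v then 1 else 0 := by
      intro j _
      rw [listCount_eq_filter]
      have hEq : (Fintype.piFinset (Lfun j)).filter (fun f => ∀ u v, G.Adj u v → f u ≠ f v)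
          = B.filter fun f => ∀ v, j v ≠ f v := by
        ext f
        simp only [hB, hA, Finset.mem_filter, Fintype.mem_piFinset, hL, Finset.mem_erase]
        constructor
        · rintro ⟨hmem, hprop⟩
          exact ⟨⟨fun v => (hmem v).2, hprop⟩, fun v => Ne.symm (hmem v).1⟩
        · rintro ⟨⟨hmem, hprop⟩, hne⟩
          exact ⟨fun v => ⟨Ne.symm (hne v), hmem v⟩, hprop⟩
      rw [hEq, Finset.card_filter]
    rw [Finset.sum_congr rfl step1, Finset.sum_comm]
    have step2 : ∀ f ∈ B, (∑ j ∈ A, if ∀ v, j v ≠ f v then 1 else 0) = k ^ n := by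
      intro f hf
      have hfA : f ∈ A := (Finset.mem_filter.mp hf).1
      have hEq : A.filter (fun j => ∀ v, j v ≠ f v)
          = Fintype.piFinset fun v => (Finset.range (k + 1)).erase (f v) := by
        ext j
        simp only [hA, Finset.mem_filter, Fintype.mem_piFinset, Finset.mem_erase]
        constructor
        · rintro ⟨hmem, hne⟩
          exact fun v => ⟨hne v, hmem v⟩
        · intro hj
          exact ⟨fun v => (hj v).2, fun v => (hj v).1⟩
      rw [← Finset.card_filter, hEq, Fintype.card_piFinset]
      have hcard : ∀ v : V, ((Finset.range (k + 1)).erase (f v)).card = k := by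
        intro v
        have : f v ∈ Finset.range (k + 1) := Fintype.mem_piFinset.mp hfA v
        rw [Finset.card_erase_of_mem this, Finset.card_range]
        rfl
      simp [hcard, hn]
    rw [Finset.sum_congr rfl step2, Finset.sum_const, smul_eq_mul]
    congr 1
    rw [properCount_eq_filter]
  have hAcard : A.card = (k + 1) ^ n := by
    rw [hA, Fintype.card_piFinset]
    simp [hn]
  have hlt : ∑ j ∈ A, listCount G (Lfun j) < ∑ _j ∈ A, properCount G k := by
    rw [key, Finset.sum_const, smul_eq_mul, hAcard]
    calc properCount G (k + 1) * k ^ n < properCount G k * (k + 1) ^ n := hnat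
      _ = (k + 1) ^ n * properCount G k := by ring
  obtain ⟨j, hjA, hjlt⟩ := Finset.exists_lt_of_sum_lt hlt
  have hLcard : ∀ v, ((Lfun j) v).card = k := by
    intro v
    have : j v ∈ Finset.range (k + 1) := Fintype.mem_piFinset.mp hjA v
    rw [hL]
    rw [Finset.card_erase_of_mem this, Finset.card_range]
    rfl
  have hmem : listCount G (Lfun j) ∈
      {m | ∃ L : V → Finset ℕ, (∀ v, (L v).card = k) ∧ m = listCount G L} :=
    ⟨Lfun j, hLcard, rfl⟩
  exact lt_of_le_of_lt (Nat.sInf_le hmem) hjlt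
end

section
/- For any graph G and any integer k ≥ 2, the dual DP color function satisfies P*_DP(G, k) ≥ 2. -/
open scoped Classical

/-!
Match every edge of `G` by the transposition of colours `0` and `1`. In the resulting full cover
a colour moved by the matching never meets itself across an edge, so the two constant
assignments `0` and `1` are both `H`-colorings.
-/

section

variable {V : Type*} {k : ℕ}

lemma le_dualDPColorFn [Finite V] {G : SimpleGraph V} {H : SimpleGraph (V × Fin k)}
    (hH : IsFullDPCover G k H) : dpCount k H ≤ dualDPColorFn G k := by
  have hbdd : BddAbove {m | ∃ H : SimpleGraph (V × Fin k), IsFullDPCover G k H ∧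
      m = dpCount k H} := by
    refine ⟨Nat.card (V → Fin k), ?_⟩
    rintro m ⟨H', -, rfl⟩
    exact Nat.card_le_card_of_injective Subtype.val Subtype.val_injective
  exact le_csSup hbdd ⟨H, hH, rfl⟩

lemma two_le_dpCount [Finite V] [Nonempty V] {H : SimpleGraph (V × Fin k)} {a b : Fin k}
    (hab : a ≠ b) (ha : ∀ u v : V, u ≠ v → ¬ H.Adj (u, a) (v, a))
    (hb : ∀ u v : V, u ≠ v → ¬ H.Adj (u, b) (v, b)) : 2 ≤ dpCount k H := by
  have : Nontrivial {f : V → Fin k // ∀ u v : V, u ≠ v → ¬ H.Adj (u, f u) (v, f v)} :=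
    ⟨⟨fun _ => a, ha⟩, ⟨fun _ => b, hb⟩,
      fun h => hab (congrFun (congrArg Subtype.val h) Classical.ofNonempty)⟩
  exact Finite.one_lt_card_iff_nontrivial.mpr this

def permCover (G : SimpleGraph V) {σ : Fin k → Fin k} (hσ : Function.Involutive σ) :
    SimpleGraph (V × Fin k) where
  Adj x y := (x.1 = y.1 ∧ x.2 ≠ y.2) ∨ (G.Adj x.1 y.1 ∧ y.2 = σ x.2)
  symm := ⟨by
    rintro ⟨u, i⟩ ⟨v, j⟩ (⟨rfl, hij⟩ | ⟨huv, rfl⟩)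
    · exact Or.inl ⟨rfl, hij.symm⟩
    · exact Or.inr ⟨huv.symm, (hσ i).symm⟩⟩
  loopless := ⟨by
    rintro ⟨u, i⟩ (⟨-, hii⟩ | ⟨huu, -⟩)
    · exact hii rfl
    · exact G.irrefl huu⟩

section permCover

variable {G : SimpleGraph V} {σ : Fin k → Fin k} (hσ : Function.Involutive σ)

lemma permCover_adj_of_adj {u v : V} (huv : G.Adj u v) {i j : Fin k} :
    (permCover G hσ).Adj (u, i) (v, j) ↔ j = σ i := by
  simp [permCover, huv.ne, huv]

lemma isFullDPCover_permCover : IsFullDPCover G k (permCover G hσ) := by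
  refine ⟨⟨fun v i j hij => Or.inl ⟨rfl, hij⟩, ?_, fun u v huv => ?_⟩, fun u v huv i => ?_⟩
  · rintro u v i j (⟨huv, -⟩ | ⟨huv, -⟩)
    exacts [Or.inl huv, Or.inr huv]
  · simp only [permCover_adj_of_adj hσ huv]
    exact ⟨fun i j j' hj hj' => hj.trans hj'.symm, fun i i' j hi hi' => hσ.injective (hi ▸ hi')⟩
  · simp only [permCover_adj_of_adj hσ huv]
    exact existsUnique_eq

lemma permCover_not_adj_self {c : Fin k} (hc : σ c ≠ c) {u v : V} (huv : u ≠ v) :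
    ¬ (permCover G hσ).Adj (u, c) (v, c) := by
  rintro (⟨h, -⟩ | ⟨-, h⟩)
  exacts [huv h, hc h.symm]

end permCover

end

theorem stmt4 {V : Type*} [Fintype V] [Nonempty V] (G : SimpleGraph V) (k : ℕ) (hk : 2 ≤ k) :
    2 ≤ dualDPColorFn G k := by
  let a : Fin k := ⟨0, by omega⟩
  let b : Fin k := ⟨1, by omega⟩
  have hab : a ≠ b := by simp [a, b, Fin.ext_iff]
  have hσ : Function.Involutive (Equiv.swap a b) := Equiv.swap_apply_self a b
  calc 2 ≤ dpCount k (permCover G hσ) :=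
        two_le_dpCount hab
          (fun _ _ => permCover_not_adj_self hσ (by simpa using hab.symm))
          (fun _ _ => permCover_not_adj_self hσ (by simpa using hab))
    _ ≤ dualDPColorFn G k := le_dualDPColorFn (isFullDPCover_permCover hσ)
end

section
/- Let G be a graph on at least 2 vertices with a universal vertex w (w is adjacent to every other vertex), and let G' = G − w. Then P*_DP(G, 3) ≤ P*_DP(G', 3) + 3. -/
open scoped Classical

lemma fin3_eq_of_ne {a i c d : Fin 3} (hia : i ≠ a) (hca : c ≠ a) (hci : c ≠ i)
    (hda : d ≠ a) (hdi : d ≠ i) : c = d := by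
  have := a.isLt; have := i.isLt; have := c.isLt; have := d.isLt
  have h1 : (i:ℕ) ≠ a := fun h => hia (Fin.val_injective h)
  have h2 : (c:ℕ) ≠ a := fun h => hca (Fin.val_injective h)
  have h3 : (c:ℕ) ≠ i := fun h => hci (Fin.val_injective h)
  have h4 : (d:ℕ) ≠ a := fun h => hda (Fin.val_injective h)
  have h5 : (d:ℕ) ≠ i := fun h => hdi (Fin.val_injective h)
  exact Fin.ext (by omega)

lemma fin3_max {m a b i j : Fin 3} (ham : a ≠ m) (hbm : b ≠ m) (him : i ≠ m)
    (hjm : j ≠ m) (hia : i < a) (hjb : j < b) : a = b := by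
  have := m.isLt; have := a.isLt; have := b.isLt; have := i.isLt; have := j.isLt
  have h1 : (a:ℕ) ≠ m := fun h => ham (Fin.val_injective h)
  have h2 : (b:ℕ) ≠ m := fun h => hbm (Fin.val_injective h)
  have h3 : (i:ℕ) ≠ m := fun h => him (Fin.val_injective h)
  have h4 : (j:ℕ) ≠ m := fun h => hjm (Fin.val_injective h)
  have h5 : (i:ℕ) < a := hia
  have h6 : (j:ℕ) < b := hjb
  exact Fin.ext (by omega)

lemma dpCount_le_card {V : Type*} [Finite V] (k : ℕ) (H : SimpleGraph (V × Fin k)) :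
    dpCount k H ≤ Nat.card (V → Fin k) :=
  Nat.card_le_card_of_injective Subtype.val Subtype.val_injective

theorem stmt5 {V : Type*} [Fintype V] (G : SimpleGraph V) (h2 : 2 ≤ Fintype.card V)
    (w : V) (hw : ∀ v : V, v ≠ w → G.Adj w v) :
    dualDPColorFn G 3 ≤
      dualDPColorFn (G.comap (fun x : {v : V // v ≠ w} => (x : V))) 3 + 3 := by
  classical
  set V' := {v : V // v ≠ w} with hV'
  set G' := G.comap (fun x : V' => (x : V)) with hG'
  set S' := {m | ∃ H : SimpleGraph (V' × Fin 3), IsFullDPCover G' 3 H ∧ m = dpCount 3 H}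
    with hS'
  have hbdd : BddAbove S' := by
    refine ⟨Nat.card (V' → Fin 3), ?_⟩
    rintro m ⟨H, -, rfl⟩
    exact dpCount_le_card 3 H
  obtain ⟨v0, hv0⟩ := Fintype.exists_ne_of_one_lt_card (by omega) w
  have key : ∀ m ∈ {m | ∃ H : SimpleGraph (V × Fin 3), IsFullDPCover G 3 H ∧ m = dpCount 3 H},
      m ≤ dualDPColorFn G' 3 + 3 := by
    rintro m ⟨H, hH, rfl⟩
    obtain ⟨⟨hcl, hcr, hm⟩, hfull⟩ := hH
    -- the restricted cover
    set H' : SimpleGraph (V' × Fin 3) := H.comap (fun p => (p.1.1, p.2)) with hH'def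
    have hcov : IsFullDPCover G' 3 H' := by
      refine ⟨⟨?_, ?_, ?_⟩, ?_⟩
      · exact fun v i j hij => hcl v.1 i j hij
      · intro u v i j hadj
        rcases hcr u.1 v.1 i j hadj with h | h
        · exact Or.inl (Subtype.ext h)
        · exact Or.inr h
      · intro u v huv; exact hm u.1 v.1 huv
      · intro u v huv i; exact hfull u.1 v.1 huv i
    have hle : dpCount 3 H' ≤ dualDPColorFn G' 3 := le_csSup hbdd ⟨H', hcov, rfl⟩
    -- main inequality : dpCount 3 H ≤ dpCount 3 H' + 3
    set P : (V → Fin 3) → Prop :=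
      fun f => ∀ u v : V, u ≠ v → ¬ H.Adj (u, f u) (v, f v) with hP
    -- for every v ≠ w and every color j at v, there is a (unique) partner at w
    have hpart : ∀ (v : V), v ≠ w → ∀ j : Fin 3, ∃ i, H.Adj (w, i) (v, j) := by
      intro v hv
      set π : Fin 3 → Fin 3 := fun i => Classical.choose (hfull w v (hw v hv) i) with hπ
      have hπ1 : ∀ i, H.Adj (w, i) (v, π i) := fun i =>
        (Classical.choose_spec (hfull w v (hw v hv) i)).1
      have hinj : Function.Injective π := by
        intro i i' h
        exact (hm w v (hw v hv)).2 i i' (π i) (hπ1 i) (h ▸ hπ1 i')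
      have hsurj : Function.Surjective π := Finite.surjective_of_injective hinj
      intro j
      obtain ⟨i, hi⟩ := hsurj j
      exact ⟨i, hi ▸ hπ1 i⟩
    -- uniqueness of partners at w
    have hback : ∀ (v : V), v ≠ w → ∀ i i' j : Fin 3,
        H.Adj (w, i) (v, j) → H.Adj (w, i') (v, j) → i = i' := by
      intro v hv i i' j h h'
      exact (hm w v (hw v hv)).2 i i' j h h'
    have hfwd : ∀ (v : V), v ≠ w → ∀ i j j' : Fin 3,
        H.Adj (w, i) (v, j) → H.Adj (w, i) (v, j') → j = j' := by
      intro v hv i j j' h h'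
      exact (hm w v (hw v hv)).1 i j j' h h'
    -- the canonical blocked color of a coloring
    set σ : (V → Fin 3) → Fin 3 := fun g => Classical.choose (hpart v0 hv0 (g v0)) with hσdef
    have hσ : ∀ g : V → Fin 3, H.Adj (w, σ g) (v0, g v0) := fun g =>
      Classical.choose_spec (hpart v0 hv0 (g v0))
    have hσne : ∀ g : V → Fin 3, P g → σ g ≠ g w := by
      intro g hg h
      exact hg w v0 (Ne.symm hv0) (h ▸ hσ g)
    -- alternative-at-w colors never equal the blocked color
    have haltne : ∀ (g : V → Fin 3) (i : Fin 3), P (Function.update g w i) → i ≠ σ g := by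
      intro g i hgi h
      have hP := hgi w v0 (Ne.symm hv0)
      rw [Function.update_self, Function.update_of_ne hv0] at hP
      exact hP (h ▸ hσ g)
    -- if g has an alternative at w, then σ g blocks every vertex
    have hall : ∀ (g : V → Fin 3), P g →
        (∃ i, i ≠ g w ∧ P (Function.update g w i)) →
        ∀ v : V, v ≠ w → H.Adj (w, σ g) (v, g v) := by
      rintro g hg ⟨i, hi, hPi⟩ v hv
      obtain ⟨p, hp⟩ := hpart v hv (g v)
      have h1 : p ≠ g w := by
        intro h
        exact hg w v (Ne.symm hv) (h ▸ hp)
      have h2 : p ≠ i := by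
        intro h
        have hPv := hPi w v (Ne.symm hv)
        rw [Function.update_self, Function.update_of_ne hv] at hPv
        exact hPv (h ▸ hp)
      have h3 : σ g ≠ g w := hσne g hg
      have h4 : σ g ≠ i := by
        intro h
        exact haltne g i hPi h.symm
      have : p = σ g := fin3_eq_of_ne hi h1 h2 h3 h4
      exact this ▸ hp
    -- the two coloring subtypes
    set A := {f : V → Fin 3 // ∀ u v : V, u ≠ v → ¬ H.Adj (u, f u) (v, f v)} with hA
    set B := {g : V' → Fin 3 // ∀ u v : V', u ≠ v → ¬ H'.Adj (u, g u) (v, g v)} with hB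
    have hrestr : ∀ f : A, ∀ u v : V', u ≠ v →
        ¬ H'.Adj (u, f.1 u.1) (v, f.1 v.1) := by
      intro f u v huv
      exact f.2 u.1 v.1 (fun h => huv (Subtype.ext h))
    set Φ : A → B ⊕ Fin 3 := fun f =>
      if h : ∃ i, i < f.1 w ∧ P (Function.update f.1 w i) then Sum.inr (σ f.1)
      else Sum.inl ⟨fun v => f.1 v.1, hrestr f⟩ with hΦdef
    have hΦinj : Function.Injective Φ := by
      intro f f' hΦ
      simp only [hΦdef] at hΦ
      by_cases hf : ∃ i, i < f.1 w ∧ P (Function.update f.1 w i) <;>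
        by_cases hf' : ∃ i, i < f'.1 w ∧ P (Function.update f'.1 w i)
      · -- both inr
        rw [dif_pos hf, dif_pos hf'] at hΦ
        have hmm : σ f.1 = σ f'.1 := Sum.inr.inj hΦ
        obtain ⟨i, hilt, hPi⟩ := hf
        obtain ⟨i', hilt', hPi'⟩ := hf'
        have hfw : f.1 w ≠ σ f.1 := fun h => hσne f.1 f.2 h.symm
        have hfw' : f'.1 w ≠ σ f.1 := by
          rw [hmm]; exact fun h => hσne f'.1 f'.2 h.symm
        have hi : i ≠ σ f.1 := haltne f.1 i hPi
        have hi' : i' ≠ σ f.1 := by rw [hmm]; exact haltne f'.1 i' hPi'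
        have hww : f.1 w = f'.1 w := fin3_max hfw hfw' hi hi' hilt hilt'
        have hrest : ∀ v : V, v ≠ w → f.1 v = f'.1 v := by
          intro v hv
          have ha1 : H.Adj (w, σ f.1) (v, f.1 v) :=
            hall f.1 f.2 ⟨i, ne_of_lt hilt, hPi⟩ v hv
          have ha2 : H.Adj (w, σ f.1) (v, f'.1 v) := by
            rw [hmm]
            exact hall f'.1 f'.2 ⟨i', ne_of_lt hilt', hPi'⟩ v hv
          exact hfwd v hv (σ f.1) _ _ ha1 ha2
        apply Subtype.ext
        funext v
        by_cases hv : v = w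
        · rw [hv]; exact hww
        · exact hrest v hv
      · -- inr vs inl : impossible
        rw [dif_pos hf, dif_neg hf'] at hΦ
        exact absurd hΦ (by simp)
      · -- inl vs inr : impossible
        rw [dif_neg hf, dif_pos hf'] at hΦ
        exact absurd hΦ (by simp)
      · -- both inl
        rw [dif_neg hf, dif_neg hf'] at hΦ
        have heq : (fun v : V' => f.1 v.1) = fun v : V' => f'.1 v.1 := by
          have := Sum.inl.inj hΦ
          exact congrArg Subtype.val this
        have hrest : ∀ v : V, v ≠ w → f.1 v = f'.1 v := fun v hv =>
          congrFun heq ⟨v, hv⟩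
        have hww : f.1 w = f'.1 w := by
          by_contra hne
          rcases lt_or_gt_of_ne hne with hlt | hlt
          · apply hf'
            refine ⟨f.1 w, hlt, ?_⟩
            have : Function.update f'.1 w (f.1 w) = f.1 := by
              funext v
              by_cases hv : v = w
              · rw [hv, Function.update_self]
              · rw [Function.update_of_ne hv, hrest v hv]
            rw [this]; exact f.2
          · apply hf
            refine ⟨f'.1 w, hlt, ?_⟩
            have : Function.update f.1 w (f'.1 w) = f'.1 := by
              funext v
              by_cases hv : v = w
              · rw [hv, Function.update_self]
              · rw [Function.update_of_ne hv, (hrest v hv).symm]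
            rw [this]; exact f'.2
        apply Subtype.ext
        funext v
        by_cases hv : v = w
        · rw [hv]; exact hww
        · exact hrest v hv
    have hcard : dpCount 3 H ≤ dpCount 3 H' + 3 := by
      have h1 : Nat.card A ≤ Nat.card (B ⊕ Fin 3) :=
        Nat.card_le_card_of_injective Φ hΦinj
      have h2 : Nat.card (B ⊕ Fin 3) = Nat.card B + 3 := by
        rw [Nat.card_sum]; simp
      calc dpCount 3 H = Nat.card A := rfl
        _ ≤ Nat.card (B ⊕ Fin 3) := h1
        _ = Nat.card B + 3 := h2
        _ = dpCount 3 H' + 3 := rfl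
    omega
  rcases Set.eq_empty_or_nonempty
      {m | ∃ H : SimpleGraph (V × Fin 3), IsFullDPCover G 3 H ∧ m = dpCount 3 H} with he | hne
  · rw [dualDPColorFn, he, csSup_empty]
    exact Nat.zero_le _
  · exact csSup_le hne key
end

section
/- For every n ∈ ℕ with n ≥ 1, P*_DP(K_n, 3) ≤ 3n. -/
open scoped Classical

section Stmt6Aux


lemma fin3_third : ∀ x y z : Fin 3, x ≠ y → z ≠ x → z ≠ y → z = -x - y := by decide
lemma fin3_cases : ∀ x y z : Fin 3, x ≠ y → z ≠ y → (z = x ∨ z = -x - y) := by decide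
lemma fin3_b_ne_a : ∀ x y : Fin 3, x ≠ y → -x - y ≠ y := by decide
lemma fin3_last : ∀ x y z : Fin 3, x ≠ y → z ≠ x → z ≠ -x - y → z = y := by decide

variable {n : ℕ} [NeZero n] (H : SimpleGraph (Fin n × Fin 3))

def sCol (f : Fin n → Fin 3) : Prop :=
  ∀ u v : Fin n, u ≠ v → ¬ H.Adj (u, f u) (v, f v)

noncomputable def sBase (c : Fin 3) : Fin n → Fin 3 :=
  if h : ∃ g, sCol H g ∧ g 0 = c then h.choose else fun _ => c

noncomputable def sM (c : Fin 3) (v : Fin n) : Fin 3 :=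
  if h : ∃ j, H.Adj (0, c) (v, j) then h.choose else 0

noncomputable def sB (c : Fin 3) (v : Fin n) : Fin 3 := - sM H c v - sBase H c v

def sImp (c : Fin 3) (v w : Fin n) : Prop :=
  v ≠ 0 ∧ w ≠ 0 ∧ H.Adj (v, sB H c v) (w, sBase H c w)

abbrev sReach (c : Fin 3) : Fin n → Fin n → Prop :=
  Relation.ReflTransGen (sImp H c)

variable (hH : IsFullDPCover (⊤ : SimpleGraph (Fin n)) 3 H)

lemma sBase_spec {c : Fin 3} (h : ∃ g, sCol H g ∧ g 0 = c) :
    sCol H (sBase H c) ∧ sBase H c 0 = c := by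
  rw [sBase, dif_pos h]; exact h.choose_spec

include hH

lemma sM_adj {c : Fin 3} {v : Fin n} (hv : v ≠ 0) : H.Adj (0, c) (v, sM H c v) := by
  obtain ⟨j, hj, -⟩ := hH.2 0 v (by simp [Ne.symm hv]) c
  rw [sM, dif_pos ⟨j, hj⟩]
  exact (Exists.choose_spec (⟨j, hj⟩ : ∃ j, H.Adj (0, c) (v, j)))

lemma sM_unique {c j : Fin 3} {v : Fin n} (hv : v ≠ 0) (hj : H.Adj (0, c) (v, j)) :
    j = sM H c v := by
  obtain ⟨j', -, huniq⟩ := hH.2 0 v (by simp [Ne.symm hv]) c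
  rw [huniq j hj, huniq _ (sM_adj H hH hv)]

lemma sNotM {c : Fin 3} {f : Fin n → Fin 3} {v : Fin n}
    (hf : sCol H f) (h0 : f 0 = c) (hv : v ≠ 0) : f v ≠ sM H c v := by
  intro heq
  exact hf 0 v (Ne.symm hv) (by rw [h0, heq]; exact sM_adj H hH hv)

lemma sBaseM {c : Fin 3} {v : Fin n} (hex : ∃ g, sCol H g ∧ g 0 = c) (hv : v ≠ 0) :
    sBase H c v ≠ sM H c v :=
  sNotM H hH (sBase_spec H hex).1 (sBase_spec H hex).2 hv

lemma sVal {c : Fin 3} {f : Fin n → Fin 3} {v : Fin n}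
    (hf : sCol H f) (h0 : f 0 = c) (hv : v ≠ 0) :
    f v = sBase H c v ∨ f v = sB H c v := by
  by_cases hb : f v = sBase H c v
  · exact Or.inl hb
  · refine Or.inr (fin3_third _ _ _ ?_ (sNotM H hH hf h0 hv) hb)
    exact Ne.symm (sBaseM H hH ⟨f, hf, h0⟩ hv)

lemma sStep {c : Fin 3} {f : Fin n → Fin 3} {v w : Fin n}
    (hf : sCol H f) (h0 : f 0 = c) (hv : f v ≠ sBase H c v) (him : sImp H c v w) :
    f w ≠ sBase H c w := by
  obtain ⟨hv0, hw0, hadj⟩ := him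
  by_cases hvw : v = w
  · exact hvw ▸ hv
  · intro hw
    have hfb : f v = sB H c v := (sVal H hH hf h0 hv0).resolve_left hv
    exact hf v w hvw (by rw [hfb, hw]; exact hadj)

lemma sReachStep {c : Fin 3} {f : Fin n → Fin 3} {v w : Fin n}
    (hf : sCol H f) (h0 : f 0 = c) (hv : f v ≠ sBase H c v) (h : sReach H c v w) :
    f w ≠ sBase H c w := by
  induction h with
  | refl => exact hv
  | tail _ h2 ih => exact sStep H hH hf h0 ih h2

lemma sTot {c : Fin 3} {f : Fin n → Fin 3} {v w : Fin n}
    (hf : sCol H f) (h0 : f 0 = c) (hv0 : v ≠ 0) (hw0 : w ≠ 0) (hvw : v ≠ w)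
    (hv : f v ≠ sBase H c v) (hw : f w ≠ sBase H c w) :
    sImp H c v w ∨ sImp H c w v := by
  have hex : ∃ g, sCol H g ∧ g 0 = c := ⟨f, hf, h0⟩
  have hbase := sBase_spec H hex
  obtain ⟨j, hj, -⟩ := hH.2 v w (by simp [hvw]) (sBase H c v)
  have hja : j ≠ sBase H c w := fun h => hbase.1 v w hvw (h ▸ hj)
  have hmw : sM H c w ≠ sBase H c w := Ne.symm (sBaseM H hH hex hw0)
  rcases fin3_cases (sM H c w) (sBase H c w) j hmw hja with hjm | hjb
  · -- j = m w : show sImp v w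
    obtain ⟨j', hj', -⟩ := hH.2 v w (by simp [hvw]) (sB H c v)
    have hfv : f v = sB H c v := (sVal H hH hf h0 hv0).resolve_left hv
    have hfw : f w = sB H c w := (sVal H hH hf h0 hw0).resolve_left hw
    have hj'b : j' ≠ sB H c w := by
      intro h
      apply hf v w hvw
      rw [hfv, hfw, ← h]
      exact hj'
    have hj'm : j' ≠ sM H c w := by
      intro h
      have hadj1 : H.Adj (v, sBase H c v) (w, sM H c w) := by rw [← hjm]; exact hj
      have hadj2 : H.Adj (v, sB H c v) (w, sM H c w) := by rw [← h]; exact hj'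
      have := (hH.1.2.2 v w (by simp [hvw])).2 (sBase H c v) (sB H c v) (sM H c w)
        hadj1 hadj2
      exact fin3_b_ne_a _ _ (Ne.symm (sBaseM H hH hex hv0)) this.symm
    have hjw : j' = sBase H c w := fin3_last (sM H c w) (sBase H c w) j' hmw hj'm hj'b
    refine Or.inl ⟨hv0, hw0, ?_⟩
    rw [← hjw]
    exact hj'
  · -- j = b w : show sImp w v
    refine Or.inr ⟨hw0, hv0, SimpleGraph.Adj.symm ?_⟩
    unfold sB
    rw [← hjb]
    exact hj

lemma sNe0 {c : Fin 3} {f : Fin n → Fin 3} {v : Fin n}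
    (hf : sCol H f) (h0 : f 0 = c) (hv : f v ≠ sBase H c v) : v ≠ 0 := by
  intro h
  subst h
  exact hv (by rw [h0, (sBase_spec H ⟨f, hf, h0⟩).2])

omit hH

lemma sGen {c : Fin 3} {f : Fin n → Fin 3}
    (hH : IsFullDPCover (⊤ : SimpleGraph (Fin n)) 3 H)
    (hf : sCol H f) (h0 : f 0 = c) (hne : f ≠ sBase H c) :
    ∃ u : Fin n, f u ≠ sBase H c u ∧ ∀ w, f w ≠ sBase H c w → sReach H c u w := by
  classical
  set S : Finset (Fin n) := Finset.univ.filter (fun w => f w ≠ sBase H c w) with hS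
  obtain ⟨w₀, hw₀⟩ := Function.ne_iff.mp hne
  have hSne : S.Nonempty := ⟨w₀, by simp [hS, hw₀]⟩
  obtain ⟨u, huS, hmax⟩ := S.exists_max_image
    (fun u => (Finset.univ.filter (fun x => sReach H c u x)).card) hSne
  have hu : f u ≠ sBase H c u := (Finset.mem_filter.mp huS).2
  refine ⟨u, hu, ?_⟩
  intro w hw
  by_contra hr
  have hwu : w ≠ u := fun h => hr (h ▸ Relation.ReflTransGen.refl)
  have hu0 : u ≠ 0 := sNe0 H hH hf h0 hu
  have hw0 : w ≠ 0 := sNe0 H hH hf h0 hw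
  rcases sTot H hH hf h0 hu0 hw0 (Ne.symm hwu) hu hw with h | h
  · exact hr (Relation.ReflTransGen.single h)
  · have hsub : (Finset.univ.filter (fun x => sReach H c u x)) ⊂
        (Finset.univ.filter (fun x => sReach H c w x)) := by
      constructor
      · intro x hx
        simp only [Finset.mem_filter, Finset.mem_univ, true_and] at hx ⊢
        exact Relation.ReflTransGen.head h hx
      · intro hcon
        have : w ∈ Finset.univ.filter (fun x => sReach H c w x) := by
          simp only [Finset.mem_filter, Finset.mem_univ, true_and]
          exact Relation.ReflTransGen.refl
        have := hcon this
        simp only [Finset.mem_filter, Finset.mem_univ, true_and] at this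
        exact hr this
    have := Finset.card_lt_card hsub
    have := hmax w (Finset.mem_filter.mpr ⟨Finset.mem_univ w, hw⟩)
    omega

lemma sMain (hH : IsFullDPCover (⊤ : SimpleGraph (Fin n)) 3 H) :
    Nat.card {f : Fin n → Fin 3 // sCol H f} ≤ 3 * n := by
  classical
  have hinj : ∃ Φ : {f : Fin n → Fin 3 // sCol H f} → Fin 3 × Fin n, Function.Injective Φ := by
    refine ⟨fun fp => (fp.1 0,
      if h : fp.1 = sBase H (fp.1 0) then 0 else (sGen H hH fp.2 rfl h).choose), ?_⟩
    rintro ⟨f, hf⟩ ⟨g, hg⟩ hfg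
    simp only [Prod.mk.injEq] at hfg
    obtain ⟨h1, h2⟩ := hfg
    by_cases hfb : f = sBase H (f 0) <;> by_cases hgb : g = sBase H (g 0)
    · have hbb : sBase H (f 0) = sBase H (g 0) := by rw [h1]
      exact Subtype.ext (hfb.trans (hbb.trans hgb.symm))
    · exfalso
      rw [dif_pos hfb, dif_neg hgb] at h2
      obtain ⟨hgu, -⟩ := (sGen H hH hg rfl hgb).choose_spec
      exact sNe0 H hH hg rfl hgu h2.symm
    · exfalso
      rw [dif_neg hfb, dif_pos hgb] at h2
      obtain ⟨hfu, -⟩ := (sGen H hH hf rfl hfb).choose_spec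
      exact sNe0 H hH hf rfl hfu h2
    · rw [dif_neg hfb, dif_neg hgb] at h2
      obtain ⟨u, hfu, hfgen, hgu, hggen⟩ : ∃ u : Fin n,
          f u ≠ sBase H (f 0) u ∧ (∀ w, f w ≠ sBase H (f 0) w → sReach H (f 0) u w) ∧
          g u ≠ sBase H (f 0) u ∧ (∀ w, g w ≠ sBase H (f 0) w → sReach H (f 0) u w) := by
        refine ⟨(sGen H hH hg rfl hgb).choose, ?_, ?_, ?_, ?_⟩
        · have := ((sGen H hH hf rfl hfb).choose_spec).1
          rw [h2] at this; exact this
        · have := ((sGen H hH hf rfl hfb).choose_spec).2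
          rw [h2] at this; exact this
        · rw [h1]; exact ((sGen H hH hg rfl hgb).choose_spec).1
        · rw [h1]; exact ((sGen H hH hg rfl hgb).choose_spec).2
      refine Subtype.ext (funext fun v => ?_)
      show f v = g v
      by_cases hr : sReach H (f 0) u v
      · have hfv : f v ≠ sBase H (f 0) v := sReachStep H hH hf rfl hfu hr
        have hgv : g v ≠ sBase H (f 0) v := sReachStep H hH hg h1.symm hgu hr
        have hv0 : v ≠ 0 := sNe0 H hH hf rfl hfv
        rw [(sVal H hH hf rfl hv0).resolve_left hfv,
          (sVal H hH hg h1.symm hv0).resolve_left hgv]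
      · have hfv : f v = sBase H (f 0) v := by
          by_contra hc; exact hr (hfgen v hc)
        have hgv : g v = sBase H (f 0) v := by
          by_contra hc; exact hr (hggen v hc)
        rw [hfv, hgv]
  obtain ⟨Φ, hΦ⟩ := hinj
  calc Nat.card {f : Fin n → Fin 3 // sCol H f} ≤ Nat.card (Fin 3 × Fin n) :=
        Nat.card_le_card_of_injective Φ hΦ
    _ = 3 * n := by simp [Nat.card_eq_fintype_card]

end Stmt6Aux

theorem stmt6 (n : ℕ) (hn : 1 ≤ n) :
    dualDPColorFn (⊤ : SimpleGraph (Fin n)) 3 ≤ 3 * n := by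
  haveI : NeZero n := ⟨Nat.one_le_iff_ne_zero.mp hn⟩
  rw [dualDPColorFn]
  set S := {m | ∃ H : SimpleGraph (Fin n × Fin 3),
      IsFullDPCover (⊤ : SimpleGraph (Fin n)) 3 H ∧ m = dpCount 3 H} with hS
  by_cases hne : S.Nonempty
  · refine csSup_le hne ?_
    rintro m ⟨H, hH, rfl⟩
    exact sMain H hH
  · rw [Set.not_nonempty_iff_eq_empty.mp hne, csSup_empty]
    exact Nat.zero_le _
end

section
/- For all m, n, k ∈ ℕ, the dual DP color function of the complete bipartite graph K_{m,n} equals its chromatic polynomial: P*_DP(K_{m,n}, k) = P(K_{m,n}, k). -/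
open scoped Classical

/-!
A full cover of `K_{α,β}` is given by one permutation `T a b` of the colors per edge: color `i`
at `a` clashes with color `T a b i` at `b`. Once the colors `g` on the side `α` are fixed, the
vertex `b` keeps `x_b(g)` free colors (those not of the form `T a b (g a)`), so the cover has
`∑_g ∏_b x_b(g)` colorings. AM-GM bounds `∏_b x_b(g)` by `(1/n) ∑_b x_b(g)^n`, and for each
fixed `b` the substitution `g a ↦ T a b (g a)` turns `∑_g x_b(g)^n` into the same sum for the
trivial cover (all `T a b = 1`), whose colorings are the proper colorings of `K_{α,β}`.
-/

open Finset

theorem Real.card_mul_prod_le_sum_pow {ι : Type*} (s : Finset ι) (z : ι → ℝ)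
    (hz : ∀ i ∈ s, 0 ≤ z i) : #s * ∏ i ∈ s, z i ≤ ∑ i ∈ s, z i ^ #s := by
  rcases s.eq_empty_or_nonempty with rfl | hs
  · simp
  have hcard : (0 : ℝ) < #s := by exact_mod_cast hs.card_pos
  have amgm := Real.geom_mean_le_arith_mean_weighted s (fun _ => (#s : ℝ)⁻¹) (fun i => z i ^ #s)
    (fun _ _ => by positivity) (by simp [hcard.ne']) (fun i hi => pow_nonneg (hz i hi) _)
  have hroot : ∀ i ∈ s, (z i ^ #s) ^ (#s : ℝ)⁻¹ = z i := fun i hi =>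
    pow_rpow_inv_natCast (hz i hi) (by positivity)
  rw [prod_congr rfl hroot, ← mul_sum] at amgm
  calc (#s : ℝ) * ∏ i ∈ s, z i ≤ #s * ((#s : ℝ)⁻¹ * ∑ i ∈ s, z i ^ #s) := by gcongr
    _ = ∑ i ∈ s, z i ^ #s := by field_simp

theorem Nat.card_mul_prod_le_sum_pow {ι : Type*} (s : Finset ι) (y : ι → ℕ) :
    #s * ∏ i ∈ s, y i ≤ ∑ i ∈ s, y i ^ #s := by
  exact_mod_cast Real.card_mul_prod_le_sum_pow s (fun i => (y i : ℝ)) fun _ _ => by positivity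

section TwistedCount

variable {α β γ : Type*} [Fintype α] [Fintype β] [Fintype γ]

/-- The number of colorings of the full cover of `K_{α,β}` in which color `i` at `a` clashes
with color `T a b i` at `b`. -/
noncomputable def twistedCount (T : α → β → Equiv.Perm γ) : ℕ :=
  Nat.card {p : (α → γ) × (β → γ) // ∀ a b, p.2 b ≠ T a b (p.1 a)}

theorem twistedCount_eq_sum (T : α → β → Equiv.Perm γ) :
    twistedCount T = ∑ g : α → γ, ∏ b, #(univ.image fun a => T a b (g a))ᶜ := by
  rw [twistedCount, Nat.card_eq_fintype_card, Fintype.card_congr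
    (Equiv.subtypeProdEquivSigmaSubtype fun (g : α → γ) (h : β → γ) => ∀ a b, h b ≠ T a b (g a)),
    Fintype.card_sigma]
  refine sum_congr rfl fun g _ => ?_
  have avoid : {h : β → γ // ∀ a b, h b ≠ T a b (g a)} ≃
      ∀ b, {c : γ // c ∈ (univ.image fun a => T a b (g a))ᶜ} :=
    (Equiv.subtypeEquivRight fun h => by simp [forall_comm (α := α), eq_comm]).trans
      Equiv.subtypePiEquivPi
  rw [Fintype.card_congr avoid, Fintype.card_pi]
  simp only [Fintype.card_coe]

theorem twistedCount_le_twistedCount_one (T : α → β → Equiv.Perm γ) :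
    twistedCount T ≤ twistedCount (fun _ _ => 1 : α → β → Equiv.Perm γ) := by
  have hone : twistedCount (fun _ _ => 1 : α → β → Equiv.Perm γ) =
      ∑ g : α → γ, #(univ.image g)ᶜ ^ Fintype.card β := by
    simp [twistedCount_eq_sum]
  rw [twistedCount_eq_sum, hone]
  rcases (Fintype.card β).eq_zero_or_pos with hn | hn
  · simp [Fintype.card_eq_zero_iff.mp hn]
  refine Nat.le_of_mul_le_mul_left ?_ hn
  calc Fintype.card β * ∑ g : α → γ, ∏ b, #(univ.image fun a => T a b (g a))ᶜ
      ≤ ∑ g : α → γ, ∑ b, #(univ.image fun a => T a b (g a))ᶜ ^ Fintype.card β := by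
        rw [mul_sum]
        exact sum_le_sum fun g _ => Nat.card_mul_prod_le_sum_pow univ _
    _ = ∑ b, ∑ g : α → γ, #(univ.image fun a => T a b (g a))ᶜ ^ Fintype.card β := sum_comm
    _ = ∑ _b : β, ∑ g : α → γ, #(univ.image g)ᶜ ^ Fintype.card β :=
        sum_congr rfl fun b _ =>
          Fintype.sum_equiv (Equiv.piCongrRight fun a => T a b) _ _ fun _ => rfl
    _ = Fintype.card β * ∑ g : α → γ, #(univ.image g)ᶜ ^ Fintype.card β := by simp

end TwistedCount

def trivialCover {V : Type*} (G : SimpleGraph V) (k : ℕ) : SimpleGraph (V × Fin k) where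
  Adj p q := (p.1 = q.1 ∧ p.2 ≠ q.2) ∨ (G.Adj p.1 q.1 ∧ p.2 = q.2)
  symm := ⟨fun _ _ h => h.imp (fun h => ⟨h.1.symm, h.2.symm⟩) fun h => ⟨h.1.symm, h.2.symm⟩⟩

theorem trivialCover_adj_of_adj {V : Type*} {G : SimpleGraph V} {k : ℕ} {u v : V}
    (huv : G.Adj u v) {i j : Fin k} : (trivialCover G k).Adj (u, i) (v, j) ↔ i = j := by
  simp [trivialCover, huv, G.ne_of_adj huv]

theorem isFullDPCover_trivialCover {V : Type*} (G : SimpleGraph V) (k : ℕ) :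
    IsFullDPCover G k (trivialCover G k) := by
  refine ⟨⟨fun v i j hij => Or.inl ⟨rfl, hij⟩, fun u v i j h => h.imp And.left And.left,
    fun u v huv => ?_⟩, fun u v huv i => ?_⟩ <;> simp only [trivialCover_adj_of_adj huv]
  · exact ⟨fun _ _ _ h h' => h.symm.trans h', fun _ _ _ h h' => h.trans h'.symm⟩
  · exact existsUnique_eq'

theorem dpCount_trivialCover {V : Type*} (G : SimpleGraph V) (k : ℕ) :
    dpCount k (trivialCover G k) = properCount G k := by
  refine Nat.card_congr (Equiv.subtypeEquivRight fun f => ⟨fun h u v huv heq => ?_, ?_⟩)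
  · exact h u v (G.ne_of_adj huv) (Or.inr ⟨huv, heq⟩)
  · rintro h u v huv (⟨huv', -⟩ | ⟨hadj, heq⟩)
    exacts [huv huv', h u v hadj heq]

theorem IsFullDPCover.exists_perm {V : Type*} {G : SimpleGraph V} {k : ℕ}
    {H : SimpleGraph (V × Fin k)} (hH : IsFullDPCover G k H) {u v : V} (huv : G.Adj u v) :
    ∃ σ : Equiv.Perm (Fin k), ∀ i j, H.Adj (u, i) (v, j) ↔ σ i = j := by
  choose σ hσ using hH.2 u v huv
  have hinj : σ.Injective := fun i i' h =>
    (hH.1.2.2 u v huv).2 i i' _ (hσ i).1 (h ▸ (hσ i').1)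
  exact ⟨Equiv.ofBijective σ hinj.bijective_of_finite, fun i j =>
    ⟨fun h => ((hσ i).2 j h).symm, fun h => h ▸ (hσ i).1⟩⟩

section CompleteBipartite

variable {α β : Type*} {k : ℕ}

theorem dpCount_eq_twistedCount {H : SimpleGraph ((α ⊕ β) × Fin k)}
    (hH : IsDPCover (completeBipartiteGraph α β) k H) (T : α → β → Equiv.Perm (Fin k))
    (hT : ∀ a b i j, H.Adj (.inl a, i) (.inr b, j) ↔ T a b i = j) :
    dpCount k H = twistedCount T := by
  refine Nat.card_congr (Equiv.subtypeEquiv (Equiv.sumArrowEquivProdArrow α β (Fin k)) fun f =>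
    ⟨fun h a b heq => h (.inl a) (.inr b) Sum.inl_ne_inr ((hT _ _ _ _).2 heq.symm), ?_⟩)
  intro h u v huv hadj
  obtain rfl | hG := hH.2.1 _ _ _ _ hadj
  · exact huv rfl
  rcases u with a | b <;> rcases v with a' | b' <;> simp at hG
  · exact h a b' ((hT _ _ _ _).1 hadj).symm
  · exact h a' b ((hT _ _ _ _).1 hadj.symm).symm

theorem dpCount_le_properCount_completeBipartiteGraph [Fintype α] [Fintype β]
    {H : SimpleGraph ((α ⊕ β) × Fin k)}
    (hH : IsFullDPCover (completeBipartiteGraph α β) k H) :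
    dpCount k H ≤ properCount (completeBipartiteGraph α β) k := by
  choose T hT using fun a b => hH.exists_perm (u := .inl a) (v := .inr b) (by simp)
  have htriv : ∀ a b i j, (trivialCover (completeBipartiteGraph α β) k).Adj
      (.inl a, i) (.inr b, j) ↔ (1 : Equiv.Perm (Fin k)) i = j := fun a b i j =>
    trivialCover_adj_of_adj (by simp)
  calc dpCount k H = twistedCount T := dpCount_eq_twistedCount hH.1 T hT
    _ ≤ twistedCount fun _ _ => 1 := twistedCount_le_twistedCount_one T
    _ = dpCount k (trivialCover _ k) :=
        (dpCount_eq_twistedCount (isFullDPCover_trivialCover _ k).1 _ htriv).symm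
    _ = properCount (completeBipartiteGraph α β) k := dpCount_trivialCover _ k

end CompleteBipartite

theorem dualDPColorFn_eq_properCount_of_forall_le {V : Type*} {G : SimpleGraph V} {k : ℕ}
    (h : ∀ H, IsFullDPCover G k H → dpCount k H ≤ properCount G k) :
    dualDPColorFn G k = properCount G k :=
  IsGreatest.csSup_eq ⟨⟨trivialCover G k, isFullDPCover_trivialCover G k,
    (dpCount_trivialCover G k).symm⟩, by rintro _ ⟨H, hH, rfl⟩; exact h H hH⟩

theorem stmt8 (m n k : ℕ) :
    dualDPColorFn (completeBipartiteGraph (Fin m) (Fin n)) k =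
      properCount (completeBipartiteGraph (Fin m) (Fin n)) k :=
  dualDPColorFn_eq_properCount_of_forall_le fun _ => dpCount_le_properCount_completeBipartiteGraph
end

section
/- Rearrangement-type inequality: Let k, t ∈ ℕ. For each (i, j) ∈ [k] × [t] let y_{ij} ≥ 0 with y_{i1} ≤ y_{i2} ≤ … ≤ y_{it} for each i. For each i ∈ [k] let σ_i be a permutation of [t]. Then Σ_{j=1}^{t} Π_{i=1}^{k} y_{i σ_i(j)} ≤ Σ_{j=1}^{t} Π_{i=1}^{k} y_{ij}. -/
open scoped Classical

/-
Each nonnegative nondecreasing sequence `y i` is a nonnegative combination of indicators of the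
up-sets `{j | s ≤ j}`. Both sides are multilinear in the `y i`, so it suffices to compare them on
indicators, where the left side counts the `j` with `s i ≤ σ i j` for all `i` and the right side
those with `s i ≤ j` for all `i`. The first count is at most the number of `j` with
`max s = s i₀ ≤ σ i₀ j`, which equals the second count since `σ i₀` is a bijection.
-/

open Finset

lemma Fin.exists_nonneg_sum_le_eq_of_monotone {R : Type*} [AddCommGroup R] [PartialOrder R]
    [IsOrderedAddMonoid R] {t : ℕ} {y : Fin t → R} (hy : ∀ j, 0 ≤ y j) (hmono : Monotone y) :
    ∃ d : Fin t → R, (∀ s, 0 ≤ d s) ∧ ∀ j, y j = ∑ s, if s ≤ j then d s else 0 := by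
  induction t with
  | zero => exact ⟨finZeroElim, finZeroElim, finZeroElim⟩
  | succ t ih =>
    obtain ⟨d, hd, hyd⟩ := ih (y := fun j => y j.succ - y 0)
      (fun j => sub_nonneg.2 (hmono (Fin.zero_le _))) fun a b hab => by
        simpa using hmono (Fin.succ_le_succ_iff.2 hab)
    refine ⟨Fin.cons (y 0) d, Fin.cases (hy 0) hd, Fin.cases ?_ fun j => ?_⟩
    · simp
    · simp [Fin.sum_univ_succ, ← hyd]

lemma sum_prod_sum_ite_le_eq {R ι α : Type*} [CommSemiring R] [Fintype ι] [DecidableEq ι]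
    [LinearOrder α] [Fintype α] (d : ι → α → R) (τ : ι → α → α) :
    ∑ j, ∏ i, ∑ s, (if s ≤ τ i j then d i s else 0) =
      ∑ f : ι → α, #{j | ∀ i, f i ≤ τ i j} * ∏ i, d i (f i) := by
  simp only [Fintype.prod_sum, Fintype.prod_ite_zero]
  rw [sum_comm]
  refine sum_congr rfl fun f _ => ?_
  rw [← sum_filter, sum_const, nsmul_eq_mul]

lemma card_filter_forall_le_perm_apply_le {ι α : Type*} [Fintype ι] [LinearOrder α] [Fintype α]
    (σ : ι → Equiv.Perm α) (s : ι → α) :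
    #{j | ∀ i, s i ≤ σ i j} ≤ #{j | ∀ i, s i ≤ j} := by
  cases isEmpty_or_nonempty ι with
  | inl _ => simp
  | inr _ =>
    obtain ⟨i₀, -, hi₀⟩ := exists_max_image univ s univ_nonempty
    calc #{j | ∀ i, s i ≤ σ i j}
        ≤ #{j | s i₀ ≤ σ i₀ j} := card_le_card fun j => by simpa using fun h => h i₀
      _ = #{j | s i₀ ≤ j} := card_equiv (σ i₀) (by simp)
      _ = #{j | ∀ i, s i ≤ j} := congrArg card <| filter_congr fun j _ =>
        ⟨fun h i => (hi₀ i (mem_univ i)).trans h, fun h => h i₀⟩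

theorem stmt10 (k t : ℕ) (y : Fin k → Fin t → ℝ) (hy : ∀ i j, 0 ≤ y i j)
    (hmono : ∀ i : Fin k, Monotone (y i)) (σ : Fin k → Equiv.Perm (Fin t)) :
    ∑ j : Fin t, ∏ i : Fin k, y i (σ i j) ≤ ∑ j : Fin t, ∏ i : Fin k, y i j := by
  choose d hd hyd using fun i => Fin.exists_nonneg_sum_le_eq_of_monotone (hy i) (hmono i)
  have h_expand (τ : Fin k → Fin t → Fin t) :
      ∑ j, ∏ i, y i (τ i j) = ∑ f : Fin k → Fin t, #{j | ∀ i, f i ≤ τ i j} * ∏ i, d i (f i) := by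
    simp only [hyd, sum_prod_sum_ite_le_eq]
    -- `∀ i : Fin k` is decided by `Nat.decidableForallFin` here, generically in the lemma
    congr!
  calc ∑ j, ∏ i, y i (σ i j)
      = ∑ f : Fin k → Fin t, #{j | ∀ i, f i ≤ σ i j} * ∏ i, d i (f i) := h_expand fun i => σ i
    _ ≤ ∑ f : Fin k → Fin t, #{j | ∀ i, f i ≤ j} * ∏ i, d i (f i) := by
      refine sum_le_sum fun f _ => mul_le_mul_of_nonneg_right ?_ (prod_nonneg fun i _ => hd i (f i))
      exact Nat.cast_le.2 (by convert card_filter_forall_le_perm_apply_le σ f)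
    _ = ∑ j, ∏ i, y i j := (h_expand fun _ j => j).symm
end

section
/- For n ≥ 10, the Shameful (K_{n,n}, 2)-Inequality fails: P(K_{n,n}, 3)/3^{2n} < P(K_{n,n}, 2)/2^{2n}. -/
open scoped Classical

/-! In a proper `3`-colouring of `K_{n,n}` one side is monochromatic, since two colours on each
side would need four colours; every vertex of the other side then has `2` colours to choose
from, so `P(K_{n,n}, 3) ≤ 6 · 2 ^ n`, while `P(K_{n,n}, 2) ≥ 2`. The claim thus reduces to
`6 · 2 ^ n · 4 ^ n < 2 · 9 ^ n`, i.e. `3 · 8 ^ n < 9 ^ n`, which holds from `n = 10` on. -/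

open Function Set Sum

variable {α β γ : Type*}

theorem Fin.three_eq_of_ne {x y u v : Fin 3} (hxy : x ≠ y) (hux : u ≠ x) (huy : u ≠ y)
    (hvx : v ≠ x) (hvy : v ≠ y) : u = v := by
  revert x y u v; decide

theorem completeBipartiteGraph_adj_ne_iff {f : α ⊕ β → γ} :
    (∀ u v, (completeBipartiteGraph α β).Adj u v → f u ≠ f v) ↔ ∀ a b, f (inl a) ≠ f (inr b) := by
  refine ⟨fun hf a b ↦ hf _ _ (by simp), ?_⟩
  rintro hf (a | a) (b | b) hab <;> simp only [completeBipartiteGraph_adj, isLeft_inl,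
    isRight_inl, isLeft_inr, isRight_inr] at hab <;> simp_all [eq_comm]

theorem const_left_or_const_right_of_forall_ne {f : α ⊕ β → Fin 3}
    (hf : ∀ a b, f (inl a) ≠ f (inr b)) :
    (∀ a a', f (inl a) = f (inl a')) ∨ ∀ b b', f (inr b) = f (inr b') := by
  by_contra! h
  obtain ⟨⟨a, a', ha⟩, b, b', hb⟩ := h
  exact hb (Fin.three_eq_of_ne ha (hf a b).symm (hf a' b).symm (hf a b').symm (hf a' b').symm)

theorem exists_succAbove_comp_eq {k : ℕ} {c : Fin (k + 1)} {g : β → Fin (k + 1)}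
    (hg : ∀ b, g b ≠ c) : ∃ h : β → Fin k, g = c.succAbove ∘ h := by
  rw [← range_subset_range_iff_exists_comp, Fin.range_succAbove]
  rintro _ ⟨b, rfl⟩
  exact hg b

theorem properCount_completeBipartiteGraph_three_le [Finite α] [Finite β] [Nonempty α]
    [Nonempty β] :
    properCount (completeBipartiteGraph α β) 3 ≤ 3 * 2 ^ Nat.card β + 3 * 2 ^ Nat.card α := by
  let left (p : Fin 3 × (β → Fin 2)) : α ⊕ β → Fin 3 := Sum.elim (fun _ ↦ p.1) (p.1.succAbove ∘ p.2)
  let right (p : Fin 3 × (α → Fin 2)) : α ⊕ β → Fin 3 := Sum.elim (p.1.succAbove ∘ p.2) (fun _ ↦ p.1)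
  have hcover : {f | ∀ u v, (completeBipartiteGraph α β).Adj u v → f u ≠ f v} ⊆
      range left ∪ range right := by
    intro f hf
    rw [mem_ofPred_eq, completeBipartiteGraph_adj_ne_iff] at hf
    obtain ⟨a₀⟩ := ‹Nonempty α›
    obtain ⟨b₀⟩ := ‹Nonempty β›
    rcases const_left_or_const_right_of_forall_ne hf with hl | hr
    · obtain ⟨h, hh⟩ := exists_succAbove_comp_eq fun b ↦ (hf a₀ b).symm
      refine Or.inl ⟨(f (inl a₀), h), funext ?_⟩
      rintro (a | b)
      · exact (hl a a₀).symm
      · exact (congrFun hh b).symm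
    · obtain ⟨h, hh⟩ := exists_succAbove_comp_eq fun a ↦ hf a b₀
      refine Or.inr ⟨(f (inr b₀), h), funext ?_⟩
      rintro (a | b)
      · exact (congrFun hh a).symm
      · exact (hr b b₀).symm
  calc properCount (completeBipartiteGraph α β) 3
      ≤ Nat.card ↥(range left ∪ range right) := Nat.card_mono (toFinite _) hcover
    _ ≤ Nat.card (range left) + Nat.card (range right) := card_union_le _ _
    _ ≤ Nat.card (Fin 3 × (β → Fin 2)) + Nat.card (Fin 3 × (α → Fin 2)) :=
      add_le_add (Finite.card_range_le _) (Finite.card_range_le _)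
    _ = 3 * 2 ^ Nat.card β + 3 * 2 ^ Nat.card α := by simp [Nat.card_fun]

theorem two_le_properCount_completeBipartiteGraph_two [Finite α] [Finite β] [Nonempty α] :
    2 ≤ properCount (completeBipartiteGraph α β) 2 := by
  obtain ⟨a₀⟩ := ‹Nonempty α›
  have hne : ∀ i : Fin 2, i ≠ i + 1 := by decide
  let coloring (i : Fin 2) :
      {f : α ⊕ β → Fin 2 // ∀ u v, (completeBipartiteGraph α β).Adj u v → f u ≠ f v} :=
    ⟨Sum.elim (fun _ ↦ i) (fun _ ↦ i + 1), completeBipartiteGraph_adj_ne_iff.2 fun _ _ ↦ hne i⟩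
  have hinj : Injective coloring := fun i j hij ↦ congrFun (congrArg Subtype.val hij) (inl a₀)
  exact (Nat.card_fin 2).ge.trans (Nat.card_le_card_of_injective coloring hinj)

theorem three_mul_eight_pow_lt_nine_pow {n : ℕ} (hn : 10 ≤ n) : 3 * 8 ^ n < 9 ^ n := by
  induction n, hn using Nat.le_induction with
  | base => norm_num
  | succ n _ ih => rw [pow_succ, pow_succ]; omega

theorem stmt11 (n : ℕ) (hn : 10 ≤ n) :
    (properCount (completeBipartiteGraph (Fin n) (Fin n)) 3 : ℝ) / 3 ^ (2 * n) <
      (properCount (completeBipartiteGraph (Fin n) (Fin n)) 2 : ℝ) / 2 ^ (2 * n) := by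
  have : NeZero n := ⟨by omega⟩
  have h3 := properCount_completeBipartiteGraph_three_le (α := Fin n) (β := Fin n)
  have h2 := two_le_properCount_completeBipartiteGraph_two (α := Fin n) (β := Fin n)
  simp only [Nat.card_eq_fintype_card, Fintype.card_fin] at h3
  have key : properCount (completeBipartiteGraph (Fin n) (Fin n)) 3 * 4 ^ n <
      properCount (completeBipartiteGraph (Fin n) (Fin n)) 2 * 9 ^ n :=
    calc _ ≤ (3 * 2 ^ n + 3 * 2 ^ n) * 4 ^ n := by gcongr
      _ = 2 * (3 * 8 ^ n) := by rw [show (8 : ℕ) = 2 * 4 by rfl, mul_pow]; ring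
      _ < 2 * 9 ^ n := by have := three_mul_eight_pow_lt_nine_pow hn; omega
      _ ≤ _ := by gcongr
  rw [div_lt_div_iff₀ (by positivity) (by positivity), pow_mul, pow_mul]
  norm_num
  exact_mod_cast key
end

section
/- For n ≥ 10, P_ℓ(K_{n,n}, 2) < P(K_{n,n}, 2); that is, the list color function of K_{n,n} at 2 is strictly smaller than the number of proper 2-colorings. -/
open scoped Classical

theorem stmt12 (n : ℕ) (hn : 10 ≤ n) :
    listColorFn (completeBipartiteGraph (Fin n) (Fin n)) 2 <
      properCount (completeBipartiteGraph (Fin n) (Fin n)) 2 := by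
  have h3 : 3 ≤ n := by omega
  -- the bad list assignment
  set ℓ : Fin n → Finset ℕ := fun i =>
    if i.val = 0 then {0, 1} else if i.val = 1 then {0, 2} else {1, 2} with hℓ
  set L : (Fin n ⊕ Fin n) → Finset ℕ := Sum.elim ℓ ℓ with hLdef
  have hcard : ∀ v, (L v).card = 2 := by
    rintro (i | i) <;> simp only [hLdef, hℓ, Sum.elim_inl, Sum.elim_inr] <;>
      split_ifs <;> decide
  have hmem : ∀ i : ℕ, (h : i < n) → ∀ x : ℕ,
      x ∈ ℓ ⟨i, h⟩ → x = 0 ∨ x = 1 ∨ x = 2 := by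
    intro i h x hx
    simp only [hℓ] at hx
    split_ifs at hx <;> simp_all <;> omega
  have hempty : IsEmpty {f : (Fin n ⊕ Fin n) → ℕ //
      (∀ v, f v ∈ L v) ∧ ∀ u v, (completeBipartiteGraph (Fin n) (Fin n)).Adj u v → f u ≠ f v} := by
    constructor
    rintro ⟨f, hfL, hf⟩
    have hne : ∀ i j : Fin n, f (Sum.inl i) ≠ f (Sum.inr j) := by
      intro i j
      exact hf _ _ (by simp)
    have h0 : (0 : ℕ) < n := by omega
    have h1 : (1 : ℕ) < n := by omega
    have h2 : (2 : ℕ) < n := by omega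
    have ha0 := hfL (Sum.inl ⟨0, h0⟩)
    have ha1 := hfL (Sum.inl ⟨1, h1⟩)
    have ha2 := hfL (Sum.inl ⟨2, h2⟩)
    have hb0 := hfL (Sum.inr ⟨0, h0⟩)
    have hb1 := hfL (Sum.inr ⟨1, h1⟩)
    have hb2 := hfL (Sum.inr ⟨2, h2⟩)
    simp only [hLdef, hℓ, Sum.elim_inl, Sum.elim_inr] at ha0 ha1 ha2 hb0 hb1 hb2
    norm_num at ha0 ha1 ha2 hb0 hb1 hb2
    have e00 := hne ⟨0, h0⟩ ⟨0, h0⟩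
    have e01 := hne ⟨0, h0⟩ ⟨1, h1⟩
    have e02 := hne ⟨0, h0⟩ ⟨2, h2⟩
    have e10 := hne ⟨1, h1⟩ ⟨0, h0⟩
    have e11 := hne ⟨1, h1⟩ ⟨1, h1⟩
    have e12 := hne ⟨1, h1⟩ ⟨2, h2⟩
    have e20 := hne ⟨2, h2⟩ ⟨0, h0⟩
    have e21 := hne ⟨2, h2⟩ ⟨1, h1⟩
    have e22 := hne ⟨2, h2⟩ ⟨2, h2⟩
    rcases ha0 with h | h <;> rcases ha1 with h' | h' <;> rcases ha2 with h'' | h'' <;>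
      rcases hb0 with g | g <;> rcases hb1 with g' | g' <;> rcases hb2 with g'' | g'' <;>
        omega
  have hzero : listCount (completeBipartiteGraph (Fin n) (Fin n)) L = 0 := by
    unfold listCount
    exact Nat.card_eq_zero.mpr (Or.inl hempty)
  have hle : listColorFn (completeBipartiteGraph (Fin n) (Fin n)) 2 = 0 := by
    have : 0 ∈ {m | ∃ L' : (Fin n ⊕ Fin n) → Finset ℕ, (∀ v, (L' v).card = 2) ∧
        m = listCount (completeBipartiteGraph (Fin n) (Fin n)) L'} :=
      ⟨L, hcard, hzero.symm⟩
    exact Nat.le_zero.mp (Nat.sInf_le this)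
  rw [hle]
  have : Nonempty {f : (Fin n ⊕ Fin n) → Fin 2 //
      ∀ u v, (completeBipartiteGraph (Fin n) (Fin n)).Adj u v → f u ≠ f v} := by
    refine ⟨Sum.elim (fun _ => 0) (fun _ => 1), ?_⟩
    rintro (u | u) (v | v) h <;> simp_all
  exact Nat.card_pos
end
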